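/- arXiv:0902.1400 — 5 statements merged into one kernel-verified Lean document; each statement's English description precedes it below -/
import Mathlib

section
/- If a sequence of nonnegative reals d_0, d_1, d_2, ... satisfies d_0 = 0 and, for all i, d_{i+1} ≤ d_i + 1 + min(√(9α/d_i), 5α^{1/3}) (where the first term in the min is interpreted as +∞ when d_i = 0), for a fixed real α ≥ 1, then for every j ≥ 0 we have d_j ≤ 3j + 7α^{1/3} + 5α^{1/3} j^{2/3}. -/
private lemma cube_rpow (x : ℝ) (hx : 0 ≤ x) : (x ^ ((1:ℝ)/3)) ^ 3 = x := by
  rw [← Real.rpow_natCast (x ^ ((1:ℝ)/3)) 3, ← Real.rpow_mul hx]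
  norm_num

private lemma sq_rpow (x : ℝ) (hx : 0 ≤ x) : (x ^ ((1:ℝ)/3)) ^ 2 = x ^ ((2:ℝ)/3) := by
  rw [← Real.rpow_natCast (x ^ ((1:ℝ)/3)) 2, ← Real.rpow_mul hx]
  norm_num

set_option maxHeartbeats 1000000 in
theorem stmt_0 (α : ℝ) (hα : 1 ≤ α) (d : ℕ → ℝ)
    (hnn : ∀ i, 0 ≤ d i) (h0 : d 0 = 0)
    (hrec : ∀ i, d (i + 1) ≤ d i + 1 +
      (if d i = 0 then 5 * α ^ ((1:ℝ)/3)
       else min (Real.sqrt (9 * α / d i)) (5 * α ^ ((1:ℝ)/3)))) :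
    ∀ j : ℕ, d j ≤ 3 * j + 7 * α ^ ((1:ℝ)/3) + 5 * α ^ ((1:ℝ)/3) * (j : ℝ) ^ ((2:ℝ)/3) := by
  have hα0 : (0:ℝ) ≤ α := le_trans zero_le_one hα
  set β := α ^ ((1:ℝ)/3) with hβdef
  have hβ1 : 1 ≤ β := by
    calc (1:ℝ) = 1 ^ ((1:ℝ)/3) := (Real.one_rpow _).symm
    _ ≤ β := Real.rpow_le_rpow zero_le_one hα (by norm_num)
  have hβ0 : 0 < β := lt_of_lt_of_le zero_lt_one hβ1
  have hβ3 : β ^ 3 = α := cube_rpow α hα0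
  intro j
  induction j with
  | zero =>
    have : ((0:ℕ):ℝ) ^ ((2:ℝ)/3) = 0 := by
      norm_num
    rw [h0, this]
    push_cast
    nlinarith
  | succ j ih =>
    have hjnn : (0:ℝ) ≤ (j:ℝ) := Nat.cast_nonneg j
    have hstep5 : d (j+1) ≤ d j + 1 + 5*β := by
      refine (hrec j).trans ?_
      split_ifs with h
      · exact le_rfl
      · exact add_le_add le_rfl (min_le_right _ _)
    push_cast
    rw [← sq_rpow ((j:ℝ)+1) (by positivity)]
    rw [← sq_rpow (j:ℝ) hjnn] at ih
    set u := (j:ℝ) ^ ((1:ℝ)/3) with hudef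
    set v := ((j:ℝ)+1) ^ ((1:ℝ)/3) with hvdef
    have hu0 : 0 ≤ u := Real.rpow_nonneg hjnn _
    have hu3 : u ^ 3 = (j:ℝ) := cube_rpow _ hjnn
    have hv3 : v ^ 3 = (j:ℝ) + 1 := cube_rpow _ (by positivity)
    have hv1 : 1 ≤ v := by
      calc (1:ℝ) = 1 ^ ((1:ℝ)/3) := (Real.one_rpow _).symm
      _ ≤ v := Real.rpow_le_rpow zero_le_one (by linarith) (by norm_num)
    have hv0 : 0 < v := lt_of_lt_of_le zero_lt_one hv1
    have huv : u ≤ v := Real.rpow_le_rpow hjnn (by linarith) (by norm_num)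
    have hu2v2 : u ^ 2 ≤ v ^ 2 := by nlinarith
    have hvu1 : v ≤ u + 1 := by
      have h3 : v ^ 3 ≤ (u + 1) ^ 3 := by nlinarith
      nlinarith [sq_nonneg (v - u - 1), sq_nonneg (v + u + 1), sq_nonneg (v - 1), sq_nonneg (v + 1)]
    by_cases hc : d j + 1 + 5*β ≤ 3*((j:ℝ)+1) + 7*β + 5*β*v^2
    · exact hstep5.trans hc
    · push_neg at hc
      have hdl : β*(2+5*u^2) ≤ d j := by nlinarith
      have hd0 : (0:ℝ) < d j := lt_of_lt_of_le (by positivity) hdl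
      have hdne : d j ≠ 0 := ne_of_gt hd0
      set s := Real.sqrt (2 + 5*u^2) with hsdef
      have hs0 : 0 < s := Real.sqrt_pos.mpr (by positivity)
      have hs2 : s ^ 2 = 2 + 5*u^2 := Real.sq_sqrt (by positivity)
      have hsq : Real.sqrt (9*α/d j) ≤ 3*β/s := by
        rw [show 3*β/s = Real.sqrt ((3*β/s)^2) from (Real.sqrt_sq (by positivity)).symm]
        apply Real.sqrt_le_sqrt
        rw [div_pow, hs2, div_le_div_iff₀ hd0 (by positivity)]
        nlinarith [mul_le_mul_of_nonneg_left hdl (by positivity : (0:ℝ) ≤ 9*β^2)]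
      have hvv : 2 ≤ 3*v*(v^2 - u^2) := by
        have hid : 3*v*(v^2 - u^2) = (v-u)^2*(v+2*u) + 2*(v^3 - u^3) := by ring
        have h1 : v^3 - u^3 = 1 := by rw [hv3, hu3]; ring
        have hp : 0 ≤ (v-u)^2*(v+2*u) := by positivity
        rw [hid, h1]; linarith
      have h81 : 81*v^2 ≤ 100*(2+5*u^2) := by
        have hv2 : v^2 ≤ (u+1)^2 := by nlinarith [hvu1, hv0.le, hu0]
        nlinarith [sq_nonneg (419*u - 81)]
      have h9v10s : 9*v ≤ 10*s := by nlinarith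
      have hkey : 3*β/s ≤ 2 + 5*β*(v^2 - u^2) := by
        rw [div_le_iff₀ hs0]
        nlinarith [mul_nonneg (sub_nonneg.mpr h9v10s)
            (mul_nonneg hβ0.le (sub_nonneg.mpr hu2v2)),
          mul_nonneg hβ0.le (sub_nonneg.mpr hvv), hs0.le]
      have hrj := hrec j
      rw [if_neg hdne] at hrj
      have hmin : min (Real.sqrt (9*α/d j)) (5*β) ≤ 3*β/s :=
        (min_le_left _ _).trans hsq
      have hexp : 5*β*(v^2 - u^2) = 5*β*v^2 - 5*β*u^2 := by ring
      calc d (j+1) ≤ d j + 1 + min (Real.sqrt (9*α/d j)) (5*β) := hrj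
        _ ≤ (3*(j:ℝ) + 7*β + 5*β*u^2) + 1 + (3*β/s) :=
            add_le_add (add_le_add ih le_rfl) hmin
        _ ≤ 3*((j:ℝ)+1) + 7*β + 5*β*v^2 := by linarith [hkey, hexp.ge, hexp.le]
end

section
/- If a sequence of nonnegative reals d_0, d_1, ... satisfies d_0 = 0 and d_{i+1} ≤ d_i + 1 + √α for all i, with α ≥ 1, then d_j ≤ j(1 + √α) for all j, and hence d_j = O(j + √α · √j) does not hold in general; but the refined hypothesis d_{i+1} ≤ d_i + 1 + min(√(α/d_i), √α) (with the convention that the first term is ∞ when d_i = 0) implies d_j ≤ 2j + 3√α·√j + √α for all j ≥ 0. -/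
theorem stmt_1 (α : ℝ) (hα : 1 ≤ α) :
    (∀ d : ℕ → ℝ, (∀ i, 0 ≤ d i) → d 0 = 0 →
      (∀ i, d (i + 1) ≤ d i + 1 + Real.sqrt α) →
      ∀ j : ℕ, d j ≤ j * (1 + Real.sqrt α)) ∧
    (∀ d : ℕ → ℝ, (∀ i, 0 ≤ d i) → d 0 = 0 →
      (∀ i, d (i + 1) ≤ d i + 1 +
        (if d i = 0 then Real.sqrt α
         else min (Real.sqrt (α / d i)) (Real.sqrt α))) →
      ∀ j : ℕ, d j ≤ 2 * j + 3 * Real.sqrt α * Real.sqrt j + Real.sqrt α) := by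
  have hα0 : (0:ℝ) ≤ α := by linarith
  have hs : 1 ≤ Real.sqrt α := by
    rw [show (1:ℝ) = Real.sqrt 1 by simp]
    exact Real.sqrt_le_sqrt hα
  constructor
  · intro d hnn hd0 hrec j
    induction j with
    | zero => simp [hd0]
    | succ n ih =>
      have h := hrec n
      push_cast
      push_cast at ih
      nlinarith
  · intro d hnn hd0 hrec j
    induction j with
    | zero =>
      simp [hd0]
    | succ n ih =>
      have hrn := hrec n
      push_cast
      push_cast at ih
      by_cases hz : d n = 0
      · rw [if_pos hz, hz] at hrn
        nlinarith [Real.sqrt_nonneg ((n:ℝ)+1), Nat.cast_nonneg (α := ℝ) n]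
      · rw [if_neg hz] at hrn
        have hdpos : 0 < d n := lt_of_le_of_ne (hnn n) (Ne.symm hz)
        by_cases hle : d n ≤ 2 * n
        · have hm : min (Real.sqrt (α / d n)) (Real.sqrt α) ≤ Real.sqrt α :=
            min_le_right _ _
          nlinarith [Real.sqrt_nonneg ((n:ℝ)+1)]
        · push_neg at hle
          have hn1 : 1 ≤ n := by
            by_contra h
            interval_cases n
            exact hz hd0
          have hn1' : (1:ℝ) ≤ (n:ℝ) := by exact_mod_cast hn1
          set s := Real.sqrt α with hsdef
          set a := Real.sqrt (n:ℝ) with hadef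
          set b := Real.sqrt ((n:ℝ)+1) with hbdef
          set t := Real.sqrt (2*(n:ℝ)) with htdef
          have ha2 : a^2 = (n:ℝ) := Real.sq_sqrt (by linarith)
          have hb2 : b^2 = (n:ℝ)+1 := Real.sq_sqrt (by linarith)
          have ht2 : t^2 = 2*(n:ℝ) := Real.sq_sqrt (by linarith)
          have ha1 : 1 ≤ a := by
            rw [hadef, show (1:ℝ) = Real.sqrt 1 by simp]
            exact Real.sqrt_le_sqrt hn1'
          have hab : a ≤ b := Real.sqrt_le_sqrt (by linarith)
          have hbt : b ≤ t := Real.sqrt_le_sqrt (by linarith)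
          have hat : a ≤ t := Real.sqrt_le_sqrt (by linarith)
          have ht1 : 1 ≤ t := le_trans ha1 hat
          -- bound the min by s / t
          have hq : α / d n ≤ α / (2*(n:ℝ)) :=
            div_le_div_of_nonneg_left (by linarith) (by linarith) (le_of_lt hle)
          have hst : Real.sqrt (α / (2*(n:ℝ))) = s / t := by
            rw [Real.sqrt_div hα0]
          have hmin : min (Real.sqrt (α / d n)) s ≤ s / t := by
            refine le_trans (min_le_left _ _) ?_
            rw [← hst]
            exact Real.sqrt_le_sqrt hq
          -- key inequality : s / t ≤ 3 s b - 3 s a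
          have hdiff : (b - a) * (b + a) = 1 := by nlinarith
          have hkey : s / t ≤ 3*s*b - 3*s*a := by
            rw [div_le_iff₀ (by linarith : (0:ℝ) < t)]
            have hba : (0:ℝ) < b + a := by linarith
            have h1 : s*(b+a) ≤ 3*s*t := by nlinarith
            have h2 : 3*s*t = (3*s*t*(b-a))*(b+a) := by
              linear_combination -(3*s*t)*hdiff
            have h3 : s ≤ 3*s*t*(b-a) :=
              (mul_le_mul_iff_of_pos_right hba).mp (by linarith)
            calc s ≤ 3*s*t*(b-a) := h3
              _ = (3*s*b - 3*s*a)*t := by ring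
          linarith [hrn, ih, hmin, hkey]
end

section
/- Let G be a finite simple connected graph on n vertices and let g be an odd integer with g ≥ 3. If G has no cycle of length less than g (i.e., girth at least g), then the number of edges of G is at most n + n^{1+2/(g-1)}. -/
open SimpleGraph Finset


lemma cycle_of_two_paths {V : Type*} (G : SimpleGraph V) {u v : V} (p q : G.Walk u v)
    (hp : p.IsPath) (hq : q.IsPath) (hne : p.support ≠ q.support) :
    ∃ (x : V) (c : G.Walk x x), c.IsCycle ∧ c.length ≤ p.length + q.length := by
  classical
  set s : Set (Sym2 V) := {e | e ∈ p.edges ∨ e ∈ q.edges} with hs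
  set H : SimpleGraph V := SimpleGraph.fromEdgeSet s with hH
  have hHG : H ≤ G := by
    intro a b hab
    rw [hH, fromEdgeSet_adj] at hab
    rcases hab.1 with h | h
    · exact p.adj_of_mem_edges h
    · exact q.adj_of_mem_edges h
  have hpe : ∀ e ∈ p.edges, e ∈ H.edgeSet := by
    intro e he
    rw [hH, edgeSet_fromEdgeSet]
    exact ⟨Or.inl he, G.not_isDiag_of_mem_edgeSet (p.edges_subset_edgeSet he)⟩
  have hqe : ∀ e ∈ q.edges, e ∈ H.edgeSet := by
    intro e he
    rw [hH, edgeSet_fromEdgeSet]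
    exact ⟨Or.inr he, G.not_isDiag_of_mem_edgeSet (q.edges_subset_edgeSet he)⟩
  have hnotacyclic : ¬ H.IsAcyclic := by
    rw [isAcyclic_iff_path_unique]
    push_neg
    refine ⟨u, v, ⟨p.transfer H hpe, hp.transfer _⟩, ⟨q.transfer H hqe, hq.transfer _⟩, ?_⟩
    intro hcontra
    apply hne
    have := congrArg (fun r : H.Path u v => (r : H.Walk u v).support) hcontra
    simpa [Walk.support_transfer] using this
  rw [← exists_girth_eq_length] at hnotacyclic
  obtain ⟨x, c, hc, -⟩ := hnotacyclic
  refine ⟨x, c.mapLe hHG, hc.mapLe hHG, ?_⟩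
  have hclen : (c.mapLe hHG).length = c.length := by
    simp [Walk.mapLe, Walk.length_map]
  rw [hclen]
  have hnd : c.edges.Nodup := hc.edges_nodup
  have hsub : c.edges.toFinset ⊆ (p.edges ++ q.edges).toFinset := by
    intro e he
    rw [List.mem_toFinset] at he ⊢
    have := c.edges_subset_edgeSet he
    rw [hH, edgeSet_fromEdgeSet] at this
    rcases this.1 with h | h
    · exact List.mem_append_left _ h
    · exact List.mem_append_right _ h
  calc c.length = c.edges.length := (Walk.length_edges c).symm
    _ = c.edges.toFinset.card := (List.toFinset_card_of_nodup hnd).symm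
    _ ≤ (p.edges ++ q.edges).toFinset.card := Finset.card_le_card hsub
    _ ≤ (p.edges ++ q.edges).length := (p.edges ++ q.edges).toFinset_card_le
    _ = p.length + q.length := by simp [Walk.length_edges]

/-- ★ : two close neighbors coincide. -/
lemma star {V : Type*} (G : SimpleGraph V) (k D : ℕ) (hD : D + 1 ≤ k)
    (hgirth : ∀ (x : V) (c : G.Walk x x), c.IsCycle → 2 * k + 1 ≤ c.length)
    {v u w1 w2 : V} (hw1 : G.Adj u w1) (hw2 : G.Adj u w2)
    (hr1 : G.Reachable v w1) (hr2 : G.Reachable v w2)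
    (hd1 : G.dist v w1 ≤ D) (hd2 : G.dist v w2 ≤ D) (hdu : D ≤ G.dist v u) :
    w1 = w2 := by
  classical
  by_contra hne
  obtain ⟨P1, hP1path, hP1len⟩ := hr1.exists_path_of_dist
  obtain ⟨P2, hP2path, hP2len⟩ := hr2.exists_path_of_dist
  have hnotmem : ∀ (w : V) (hw : G.Adj u w) (P : G.Walk v w), P.IsPath →
      P.length = G.dist v w → G.dist v w ≤ D → u ∉ P.support := by
    intro w hw P hPpath hlen hdw hmem
    have hspec := P.take_spec hmem
    have hlensum : (P.takeUntil u hmem).length + (P.dropUntil u hmem).length = P.length := by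
      have := congrArg SimpleGraph.Walk.length hspec
      rwa [SimpleGraph.Walk.length_append] at this
    have h1 : G.dist v u ≤ (P.takeUntil u hmem).length := G.dist_le _
    have h2 : (P.dropUntil u hmem).length = 0 := by omega
    exact hw.ne (SimpleGraph.Walk.eq_of_length_eq_zero h2)
  have hm1 := hnotmem w1 hw1 P1 hP1path hP1len hd1
  have hm2 := hnotmem w2 hw2 P2 hP2path hP2len hd2
  have hm1' : u ∉ P1.reverse.support := by rwa [SimpleGraph.Walk.support_reverse, List.mem_reverse]
  have hm2' : u ∉ P2.reverse.support := by rwa [SimpleGraph.Walk.support_reverse, List.mem_reverse]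
  set R1 : G.Walk u v := SimpleGraph.Walk.cons hw1 P1.reverse with hR1
  set R2 : G.Walk u v := SimpleGraph.Walk.cons hw2 P2.reverse with hR2
  have hR1path : R1.IsPath := hP1path.reverse.cons hm1'
  have hR2path : R2.IsPath := hP2path.reverse.cons hm2'
  have hsupne : R1.support ≠ R2.support := by
    rw [hR1, hR2, SimpleGraph.Walk.support_cons, SimpleGraph.Walk.support_cons,
      P1.reverse.support_eq_cons, P2.reverse.support_eq_cons]
    intro h
    exact hne (by injection (by injection h with _ h2) with h3 _)
  obtain ⟨x, c, hcyc, hclen⟩ := cycle_of_two_paths G R1 R2 hR1path hR2path hsupne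
  have := hgirth x c hcyc
  have hR1l : R1.length = P1.length + 1 := by
    rw [hR1, SimpleGraph.Walk.length_cons, SimpleGraph.Walk.length_reverse]
  have hR2l : R2.length = P2.length + 1 := by
    rw [hR2, SimpleGraph.Walk.length_cons, SimpleGraph.Walk.length_reverse]
  omega

lemma double_count {V : Type*} (G : SimpleGraph V) [Fintype V] [DecidableEq V] [DecidableRel G.Adj] (A B : Finset V) :
    ∑ u ∈ A, (B.filter (G.Adj u)).card = ∑ w ∈ B, (A.filter (G.Adj w)).card := by
  simp only [Finset.card_filter]
  rw [Finset.sum_comm]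
  congr 1
  ext w
  congr 1
  ext u
  simp [adj_comm]

lemma moore {W : Type*} [Fintype W] [DecidableEq W] (H : SimpleGraph W) [DecidableRel H.Adj]
    (k : ℕ) (hk : 1 ≤ k)
    (hgirth : ∀ (x : W) (c : H.Walk x x), c.IsCycle → 2 * k + 1 ≤ c.length)
    (c : ℝ) (hc : 1 ≤ c) (hdeg : ∀ w : W, c ≤ (H.degree w : ℝ)) (v : W) :
    (c - 1) ^ k ≤ (Fintype.card W : ℝ) := by
  classical
  set Sph : ℕ → Finset W :=
    fun i => Finset.univ.filter (fun u => H.Reachable v u ∧ H.dist v u = i) with hSph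
  have hc1 : (0:ℝ) ≤ c - 1 := by linarith
  have claim : ∀ i, 1 ≤ i → i ≤ k → (c - 1) ^ i ≤ ((Sph i).card : ℝ) := by
    intro i
    induction i with
    | zero => omega
    | succ n ih =>
      intro _ hik
      rcases Nat.eq_or_lt_of_le (Nat.one_le_iff_ne_zero.mpr (Nat.succ_ne_zero n)) with h1 | h1
      · -- base case : i = 1
        have hn0 : n = 0 := by omega
        subst hn0
        have hsub : H.neighborFinset v ⊆ Sph 1 := by
          intro w hw
          rw [SimpleGraph.mem_neighborFinset] at hw
          simp only [hSph, Finset.mem_filter, Finset.mem_univ, true_and]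
          exact ⟨hw.reachable, (H.dist_eq_one_iff_adj).mpr hw⟩
        have := Finset.card_le_card hsub
        have hdv := hdeg v
        rw [← SimpleGraph.card_neighborFinset_eq_degree] at hdv
        calc (c-1)^1 = c - 1 := pow_one _
          _ ≤ c := by linarith
          _ ≤ ((H.neighborFinset v).card : ℝ) := hdv
          _ ≤ ((Sph 1).card : ℝ) := by exact_mod_cast this
      · -- step : n ≥ 1
        have hn1 : 1 ≤ n := by omega
        have hnk : n ≤ k := by omega
        have ihn := ih hn1 hnk
        -- key1 : each u in Sph n has ≥ c - 1 neighbors in Sph (n+1)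
        have key1 : ∀ u ∈ Sph n, (c - 1) ≤ (((Sph (n+1)).filter (H.Adj u)).card : ℝ) := by
          intro u hu
          simp only [hSph, Finset.mem_filter, Finset.mem_univ, true_and] at hu
          obtain ⟨hru, hdu⟩ := hu
          set N := H.neighborFinset u with hN
          set A := N.filter (fun w => H.Reachable v w ∧ H.dist v w ≤ n) with hA
          have hAcard : A.card ≤ 1 := by
            rw [Finset.card_le_one]
            intro a ha b hb
            simp only [hA, hN, Finset.mem_filter, SimpleGraph.mem_neighborFinset] at ha hb
            exact star H k n (by omega) hgirth ha.1 hb.1 ha.2.1 hb.2.1 ha.2.2 hb.2.2 hdu.ge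
          have hsub : N \ A ⊆ (Sph (n+1)).filter (H.Adj u) := by
            intro w hw
            rw [Finset.mem_sdiff] at hw
            obtain ⟨hwN, hwA⟩ := hw
            have hadj : H.Adj u w := (SimpleGraph.mem_neighborFinset _ _ _).mp hwN
            have hrw : H.Reachable v w := hru.trans hadj.reachable
            have hdw_le : H.dist v w ≤ n + 1 := by
              obtain ⟨P, hP, hPlen⟩ := hru.exists_path_of_dist
              have := H.dist_le (P.concat hadj)
              rwa [SimpleGraph.Walk.length_concat, hPlen, hdu] at this
            have hdw_ge : ¬ (H.dist v w ≤ n) := by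
              intro hcon
              exact hwA (by simp [hA, hN, SimpleGraph.mem_neighborFinset, hadj, hrw, hcon])
            simp only [Finset.mem_filter, hSph, Finset.mem_univ, true_and]
            exact ⟨⟨hrw, by omega⟩, hadj⟩
          have hNA : (N \ A).card + A.card = N.card :=
            Finset.card_sdiff_add_card_eq_card (Finset.filter_subset _ _)
          have hNcard : c ≤ (N.card : ℝ) := by
            rw [hN, SimpleGraph.card_neighborFinset_eq_degree]; exact hdeg u
          have := Finset.card_le_card hsub
          have hcast : ((N \ A).card : ℝ) ≤ (((Sph (n+1)).filter (H.Adj u)).card : ℝ) := by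
            exact_mod_cast this
          have h1 : ((N \ A).card : ℝ) + (A.card : ℝ) = (N.card : ℝ) := by exact_mod_cast hNA
          have h2 : ((A.card : ℝ)) ≤ 1 := by exact_mod_cast hAcard
          linarith
        -- key2 : each w in Sph (n+1) has ≤ 1 neighbor in Sph n
        have key2 : ∀ w ∈ Sph (n+1), (((Sph n).filter (H.Adj w)).card : ℝ) ≤ 1 := by
          intro w hw
          simp only [hSph, Finset.mem_filter, Finset.mem_univ, true_and] at hw
          obtain ⟨hrw, hdw⟩ := hw
          have : ((Sph n).filter (H.Adj w)).card ≤ 1 := by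
            rw [Finset.card_le_one]
            intro a ha b hb
            simp only [hSph, Finset.mem_filter, Finset.mem_univ, true_and] at ha hb
            exact star H k n (by omega) hgirth ha.2 hb.2 ha.1.1 hb.1.1 ha.1.2.le hb.1.2.le
              (by omega)
          exact_mod_cast this
        -- double counting
        have hdc : ∑ u ∈ Sph n, (((Sph (n+1)).filter (H.Adj u)).card : ℝ)
            = ∑ w ∈ Sph (n+1), (((Sph n).filter (H.Adj w)).card : ℝ) := by
          exact_mod_cast congrArg (Nat.cast : ℕ → ℝ) (double_count H (Sph n) (Sph (n+1)))
        have hlow : ((Sph n).card : ℝ) * (c - 1) ≤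
            ∑ u ∈ Sph n, (((Sph (n+1)).filter (H.Adj u)).card : ℝ) := by
          have := Finset.card_nsmul_le_sum (Sph n)
            (fun u => (((Sph (n+1)).filter (H.Adj u)).card : ℝ)) (c-1) key1
          rwa [nsmul_eq_mul] at this
        have hhigh : ∑ w ∈ Sph (n+1), (((Sph n).filter (H.Adj w)).card : ℝ)
            ≤ ((Sph (n+1)).card : ℝ) := by
          have := Finset.sum_le_card_nsmul (Sph (n+1))
            (fun w => (((Sph n).filter (H.Adj w)).card : ℝ)) 1 key2
          rwa [nsmul_eq_mul, mul_one] at this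
        calc (c-1)^(n+1) = (c-1)^n * (c-1) := pow_succ _ _
          _ ≤ ((Sph n).card : ℝ) * (c-1) := by
              apply mul_le_mul_of_nonneg_right ihn hc1
          _ ≤ ((Sph (n+1)).card : ℝ) := by rw [hdc] at hlow; linarith
  have := claim k hk le_rfl
  calc (c-1)^k ≤ ((Sph k).card : ℝ) := this
    _ ≤ (Fintype.card W : ℝ) := by
        exact_mod_cast Finset.card_le_univ _





lemma extract_min_degree {V : Type*} [Fintype V] [DecidableEq V] (G : SimpleGraph V) [DecidableRel G.Adj] (c : ℝ) (hc : 0 < c) :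
    ∀ (S : Finset V), S.Nonempty →
      (2 * c * S.card ≤ ∑ u ∈ S, ((G.neighborFinset u ∩ S).card : ℝ)) →
      ∃ T, T ⊆ S ∧ T.Nonempty ∧ ∀ v ∈ T, c ≤ ((G.neighborFinset v ∩ T).card : ℝ) := by
  intro S
  induction S using Finset.strongInductionOn with
  | _ S ih =>
    intro hS hinv
    by_cases hgood : ∀ v ∈ S, c ≤ ((G.neighborFinset v ∩ S).card : ℝ)
    · exact ⟨S, subset_rfl, hS, hgood⟩
    push_neg at hgood
    obtain ⟨v, hvS, hv⟩ := hgood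
    have hSpos : 0 < S.card := Finset.card_pos.mpr hS
    have hcard1 : S.card ≠ 1 := by
      intro h
      obtain ⟨a, ha⟩ := Finset.card_eq_one.mp h
      rw [ha] at hinv
      have hz : (G.neighborFinset a ∩ {a}).card = 0 := by
        rw [Finset.card_eq_zero]
        ext x
        simp only [Finset.mem_inter, SimpleGraph.mem_neighborFinset, Finset.mem_singleton,
          Finset.notMem_empty, iff_false]
        rintro ⟨hadj, rfl⟩
        exact G.irrefl hadj
      simp only [Finset.sum_singleton, hz, Finset.card_singleton] at hinv
      push_cast at hinv
      linarith
    have h2 : 2 ≤ S.card := by omega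
    set S' := S.erase v with hS'
    have hS'ne : S'.Nonempty := by
      rw [← Finset.card_pos, hS', Finset.card_erase_of_mem hvS]; omega
    have hcardS' : S'.card = S.card - 1 := Finset.card_erase_of_mem hvS
    -- key counting identity over ℕ
    have hstep : ∀ u, u ≠ v →
        (G.neighborFinset u ∩ S).card
          = (G.neighborFinset u ∩ S').card + (if G.Adj u v then 1 else 0) := by
      intro u huv
      have hint : G.neighborFinset u ∩ S' = (G.neighborFinset u ∩ S).erase v := by
        ext x
        simp only [hS', Finset.mem_inter, Finset.mem_erase, SimpleGraph.mem_neighborFinset]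
        tauto
      by_cases hadj : G.Adj u v
      · have hvmem : v ∈ G.neighborFinset u ∩ S := by
          simp [SimpleGraph.mem_neighborFinset, hadj, hvS]
        rw [hint, Finset.card_erase_of_mem hvmem, if_pos hadj]
        have : 0 < (G.neighborFinset u ∩ S).card := Finset.card_pos.mpr ⟨v, hvmem⟩
        omega
      · have hvmem : v ∉ G.neighborFinset u ∩ S := by
          simp [SimpleGraph.mem_neighborFinset, hadj]
        rw [hint, Finset.erase_eq_of_notMem hvmem, if_neg hadj]
        omega
    have hdveq : (S'.filter (fun u => G.Adj u v)).card = (G.neighborFinset v ∩ S).card := by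
      congr 1
      ext u
      simp only [Finset.mem_filter, hS', Finset.mem_erase, Finset.mem_inter,
        SimpleGraph.mem_neighborFinset]
      constructor
      · rintro ⟨⟨hne, hu⟩, hadj⟩; exact ⟨hadj.symm, hu⟩
      · rintro ⟨hadj, hu⟩; exact ⟨⟨fun h => G.irrefl (h ▸ hadj), hu⟩, hadj.symm⟩
    have hsum : ∑ u ∈ S, (G.neighborFinset u ∩ S).card
        = (∑ u ∈ S', (G.neighborFinset u ∩ S').card) + 2 * (G.neighborFinset v ∩ S).card := by
      rw [← Finset.add_sum_erase S _ hvS, ← hS']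
      have : ∑ u ∈ S', (G.neighborFinset u ∩ S).card
          = ∑ u ∈ S', ((G.neighborFinset u ∩ S').card + (if G.Adj u v then 1 else 0)) := by
        apply Finset.sum_congr rfl
        intro u hu
        exact hstep u (Finset.ne_of_mem_erase hu)
      rw [this, Finset.sum_add_distrib, ← Finset.card_filter, hdveq]
      omega
    -- establish invariant for S'
    have hsumR : ∑ u ∈ S, ((G.neighborFinset u ∩ S).card : ℝ)
        = (∑ u ∈ S', ((G.neighborFinset u ∩ S').card : ℝ))
          + 2 * ((G.neighborFinset v ∩ S).card : ℝ) := by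
      exact_mod_cast congrArg (Nat.cast : ℕ → ℝ) hsum
    have hcardR : (S'.card : ℝ) = (S.card : ℝ) - 1 := by
      rw [hcardS']
      have : 1 ≤ S.card := hSpos
      push_cast [this]
      ring
    have hinv' : 2 * c * S'.card ≤ ∑ u ∈ S', ((G.neighborFinset u ∩ S').card : ℝ) := by
      rw [hcardR]
      rw [hsumR] at hinv
      nlinarith [hv]
    obtain ⟨T, hTsub, hTne, hTdeg⟩ := ih S' (Finset.erase_ssubset hvS) hS'ne hinv'
    exact ⟨T, hTsub.trans (Finset.erase_subset _ _), hTne, hTdeg⟩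


theorem stmt_3 {V : Type*} [Fintype V] [DecidableEq V] (G : SimpleGraph V)
    [DecidableRel G.Adj] (hconn : G.Connected) (g : ℕ) (hg3 : 3 ≤ g) (hgodd : Odd g)
    (hgirth : (g : ℕ∞) ≤ G.girth) :
    (G.edgeFinset.card : ℝ) ≤
      (Fintype.card V : ℝ) + (Fintype.card V : ℝ) ^ (1 + 2 / ((g : ℝ) - 1)) := by
  classical
  have hV : Nonempty V := hconn.nonempty
  set n := Fintype.card V with hn
  have hn1 : 1 ≤ n := Fintype.card_pos
  obtain ⟨k, hk⟩ := hgodd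
  have hk1 : 1 ≤ k := by omega
  have hcycg : ∀ (x : V) (w : G.Walk x x), w.IsCycle → 2 * k + 1 ≤ w.length := by
    have hge : (g : ℕ∞) ≤ G.egirth := by
      rcases eq_or_ne G.egirth ⊤ with h | h
      · simp [h]
      · calc (g : ℕ∞) ≤ (G.girth : ℕ∞) := hgirth
          _ = G.egirth := by rw [SimpleGraph.girth]; exact ENat.coe_toNat h
    intro x w hw
    have h2 := (SimpleGraph.le_egirth.mp hge) x w hw
    have : g ≤ w.length := by exact_mod_cast h2
    omega
  by_contra hcon
  push_neg at hcon
  set m := G.edgeFinset.card with hm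
  have hnpos : (0:ℝ) < (n:ℝ) := by exact_mod_cast hn1
  have hnr1 : (1:ℝ) ≤ (n:ℝ) := by exact_mod_cast hn1
  have hkpos : (0:ℝ) < (k:ℝ) := by exact_mod_cast hk1
  have hexp : (1 : ℝ) + 2/((g:ℝ)-1) = 1 + 1/(k:ℝ) := by
    have hgr : (g:ℝ) = 2*(k:ℝ)+1 := by exact_mod_cast congrArg (Nat.cast : ℕ → ℝ) hk
    rw [hgr]
    field_simp
    ring
  rw [hexp] at hcon
  set c : ℝ := (m:ℝ) / (n:ℝ) with hc
  have hrpow_split : (n:ℝ)^((1:ℝ)+1/(k:ℝ)) = (n:ℝ) * (n:ℝ)^((1:ℝ)/(k:ℝ)) := by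
    rw [Real.rpow_add hnpos, Real.rpow_one]
  have hc_gt : 1 + (n:ℝ)^((1:ℝ)/(k:ℝ)) < c := by
    rw [hc, lt_div_iff₀ hnpos]
    nlinarith [hcon, hrpow_split]
  have hnk1 : (1:ℝ) ≤ (n:ℝ)^((1:ℝ)/(k:ℝ)) :=
    Real.one_le_rpow hnr1 (by positivity)
  have hc1 : (1:ℝ) ≤ c := by linarith
  have hc0 : (0:ℝ) < c := by linarith
  -- extraction
  have hcn : c * (n:ℝ) = (m:ℝ) := div_mul_cancel₀ _ (ne_of_gt hnpos)
  have hbase : 2 * c * ((Finset.univ : Finset V).card : ℝ)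
      ≤ ∑ u ∈ Finset.univ, ((G.neighborFinset u ∩ Finset.univ).card : ℝ) := by
    simp only [Finset.inter_univ, Finset.card_univ, SimpleGraph.card_neighborFinset_eq_degree]
    have hsum : ∑ u, G.degree u = 2 * m := G.sum_degrees_eq_twice_card_edges
    have hsumR : ∑ u, ((G.degree u : ℝ)) = 2 * (m:ℝ) := by exact_mod_cast hsum
    rw [hsumR, ← hn]
    nlinarith [hcn]
  obtain ⟨T, hTsub, hTne, hTdeg⟩ :=
    extract_min_degree G c hc0 Finset.univ Finset.univ_nonempty hbase
  set H : SimpleGraph (T : Set V) := G.induce (T : Set V) with hH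
  let f : H →g G := ⟨Subtype.val, fun {a b} h => h⟩
  have hfinj : Function.Injective ⇑f := Subtype.val_injective
  have hgirthH : ∀ (x : (T : Set V)) (w : H.Walk x x), w.IsCycle → 2 * k + 1 ≤ w.length := by
    intro x w hw
    have := hcycg x.1 (w.map f) (hw.map hfinj)
    rwa [SimpleGraph.Walk.length_map] at this
  have hdegeq : ∀ x : (T : Set V), H.degree x = (G.neighborFinset x.1 ∩ T).card := by
    intro x
    rw [← SimpleGraph.card_neighborFinset_eq_degree]
    refine Finset.card_bij (fun (w : (T : Set V)) (_ : w ∈ H.neighborFinset x) => (w : V))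
      ?_ ?_ ?_
    · intro a ha
      rw [SimpleGraph.mem_neighborFinset] at ha
      simp only [Finset.mem_inter, SimpleGraph.mem_neighborFinset]
      exact ⟨ha, a.2⟩
    · intro a _ b _ hab
      exact Subtype.val_injective hab
    · intro b hb
      simp only [Finset.mem_inter, SimpleGraph.mem_neighborFinset] at hb
      exact ⟨⟨b, hb.2⟩, by rw [SimpleGraph.mem_neighborFinset]; exact hb.1, rfl⟩
  have hdegH : ∀ x : (T : Set V), c ≤ (H.degree x : ℝ) := by
    intro x
    rw [hdegeq]
    exact hTdeg x.1 x.2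
  obtain ⟨v0, hv0⟩ := hTne
  have hmoore := moore H k hk1 hgirthH c hc1 hdegH ⟨v0, hv0⟩
  have hTcard : (Fintype.card (T : Set V) : ℝ) ≤ (n:ℝ) := by
    have h1 : Fintype.card (T : Set V) = T.card := by simp
    rw [h1]
    exact_mod_cast Finset.card_le_univ T
  have hid : ((n:ℝ)^((1:ℝ)/(k:ℝ)))^k = (n:ℝ) := by
    rw [← Real.rpow_natCast ((n:ℝ)^((1:ℝ)/(k:ℝ))) k, ← Real.rpow_mul (le_of_lt hnpos)]
    rw [one_div_mul_cancel (ne_of_gt hkpos), Real.rpow_one]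
  have hpowlt : (n:ℝ) < (c-1)^k := by
    have hstep : (n:ℝ)^((1:ℝ)/(k:ℝ)) < c - 1 := by linarith
    have hb0 : (0:ℝ) ≤ (n:ℝ)^((1:ℝ)/(k:ℝ)) := by positivity
    have := pow_lt_pow_left₀ hstep hb0 (by omega : k ≠ 0)
    rwa [hid] at this
  linarith
end

section
/- Let G be a finite simple connected graph on vertex set V, let u, w, y ∈ V, k a positive integer, and suppose d(u,w) = 4k+3 and the distance d(u,y) satisfies d(u,y) = d(u,w) + d(w,y) (i.e., w lies on a shortest u–y path). Let G' be obtained from G by adding an edge {u,w'} where d(w',w) ≤ 2k (so that d_{G'}(u,w) ≤ 2k+1). Then for every vertex x with d(u,x) ≤ k, d_{G'}(x,y) ≤ d_G(u,y) − k − 2, while d_G(x,y) ≥ d_G(u,y) − k; hence the distance from x to y decreases by at least 2. -/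
theorem stmt_7 {V : Type*} [Fintype V] (G : SimpleGraph V) (hconn : G.Connected)
    (u w y : V) (k : ℕ) (hk : 1 ≤ k)
    (huw : G.dist u w = 4 * k + 3)
    (hy : G.dist u y = G.dist u w + G.dist w y)
    (x : V) (hx : G.dist u x ≤ k)
    (w' : V) (hw' : G.dist w' w ≤ 2 * k) :
    (G ⊔ SimpleGraph.fromEdgeSet {s(u, w')}).dist x y ≤ G.dist u y - k - 2 ∧
    G.dist u y - k ≤ G.dist x y := by
  set G' := G ⊔ SimpleGraph.fromEdgeSet {s(u, w')} with hG'
  have hle : G ≤ G' := le_sup_left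
  have hconn' : G'.Connected := hconn.mono hle
  have hmono : ∀ a b : V, G'.dist a b ≤ G.dist a b := by
    intro a b
    obtain ⟨p, hp⟩ := (hconn a b).exists_walk_length_eq_dist
    calc G'.dist a b ≤ (p.mapLe hle).length := SimpleGraph.dist_le _
      _ = p.length := SimpleGraph.Walk.length_map _ _
      _ = G.dist a b := hp
  have huw' : G'.dist u w' ≤ 1 := by
    by_cases h : u = w'
    · subst h; simp [SimpleGraph.dist_self]
    · have hadj : G'.Adj u w' := by
        right
        refine ⟨?_, h⟩
        simp [SimpleGraph.edgeSetEmbedding]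
      calc G'.dist u w' ≤ (hadj.toWalk).length := SimpleGraph.dist_le _
        _ = 1 := rfl
  constructor
  · have h1 : G'.dist x y ≤ G'.dist x u + G'.dist u y :=
      hconn'.dist_triangle
    have h2 : G'.dist u y ≤ G'.dist u w' + G'.dist w' y :=
      hconn'.dist_triangle
    have h3 : G'.dist w' y ≤ G'.dist w' w + G'.dist w y :=
      hconn'.dist_triangle
    have hxu : G'.dist x u ≤ k := by
      calc G'.dist x u ≤ G.dist x u := hmono x u
        _ = G.dist u x := G.dist_comm
        _ ≤ k := hx
    have hww : G'.dist w' w ≤ 2 * k := le_trans (hmono w' w) hw'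
    have hwy : G'.dist w y ≤ G.dist w y := hmono w y
    omega
  · have := hconn.dist_triangle (u := u) (v := x) (w := y)
    omega
end

section
/- Let n ≥ 2 and α > 0 be reals, and let f(d) = d + 1 + √(9α/d) on the domain d ∈ [2α^{1/3}, M] where M = j + 7α^{1/3} + 5α^{1/3} j^{2/3} for some integer j ≥ 2 with M ≥ 2α^{1/3}. Then the maximum of f on this interval is attained at an endpoint, and f(M) ≤ (j+1) + 7α^{1/3} + 5α^{1/3}(j+1)^{2/3}. -/
theorem aux_endpoint (c : ℝ) {t s r : ℝ} (ht : 0 < t) (hts : t ≤ s) (hsr : s ≤ r) :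
    s^2 + 1 + c/s ≤ max (t^2 + 1 + c/t) (r^2 + 1 + c/r) := by
  have hs : 0 < s := lt_of_lt_of_le ht hts
  have hr : 0 < r := lt_of_lt_of_le hs hsr
  by_contra h
  push_neg at h
  rw [max_lt_iff] at h
  obtain ⟨h1, h2⟩ := h
  rcases eq_or_lt_of_le hts with rfl | hts'
  · exact absurd h1 (lt_irrefl _)
  rcases eq_or_lt_of_le hsr with rfl | hsr'
  · exact absurd h2 (lt_irrefl _)
  have hc1 : c < s*t*(s+t) := by
    by_contra hcon
    push_neg at hcon
    have key : c/t - c/s = c*(s-t)/(t*s) := by field_simp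
    have h1' : c*(s-t)/(t*s) < s^2 - t^2 := by
      rw [← key]; linarith
    have := (div_lt_iff₀ (mul_pos ht hs)).mp h1'
    nlinarith [mul_le_mul_of_nonneg_right hcon (le_of_lt (sub_pos.mpr hts'))]
  have hc2 : s*r*(r+s) < c := by
    by_contra hcon
    push_neg at hcon
    have key : c/s - c/r = c*(r-s)/(s*r) := by field_simp
    have h2' : r^2 - s^2 < c*(r-s)/(s*r) := by
      rw [← key]; linarith
    have := (lt_div_iff₀ (mul_pos hs hr)).mp h2'
    nlinarith [mul_le_mul_of_nonneg_right hcon (le_of_lt (sub_pos.mpr hsr'))]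
  nlinarith [mul_pos hs ht, mul_pos hs hr]

set_option maxHeartbeats 1000000 in
theorem stmt_17 (n α : ℝ) (hn : 2 ≤ n) (hα : 0 < α) (j : ℕ) (hj : 2 ≤ j)
    (M : ℝ) (hM : M = (j : ℝ) + 7 * α ^ ((1:ℝ)/3) + 5 * α ^ ((1:ℝ)/3) * (j : ℝ) ^ ((2:ℝ)/3))
    (hM2 : 2 * α ^ ((1:ℝ)/3) ≤ M) :
    (∀ d ∈ Set.Icc (2 * α ^ ((1:ℝ)/3)) M,
      d + 1 + Real.sqrt (9 * α / d) ≤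
        max ((2 * α ^ ((1:ℝ)/3)) + 1 + Real.sqrt (9 * α / (2 * α ^ ((1:ℝ)/3))))
            (M + 1 + Real.sqrt (9 * α / M))) ∧
    M + 1 + Real.sqrt (9 * α / M) ≤
      ((j : ℝ) + 1) + 7 * α ^ ((1:ℝ)/3) + 5 * α ^ ((1:ℝ)/3) * ((j : ℝ) + 1) ^ ((2:ℝ)/3) := by
  have cube : ∀ x : ℝ, 0 ≤ x → (x ^ ((1:ℝ)/3))^3 = x := by
    intro x hx
    rw [← Real.rpow_natCast (x ^ ((1:ℝ)/3)) 3, ← Real.rpow_mul hx]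
    norm_num
  have sq23 : ∀ x : ℝ, 0 ≤ x → x ^ ((2:ℝ)/3) = (x ^ ((1:ℝ)/3))^2 := by
    intro x hx
    rw [← Real.rpow_natCast (x ^ ((1:ℝ)/3)) 2, ← Real.rpow_mul hx]
    norm_num
  obtain ⟨A, hAdef⟩ : ∃ A : ℝ, A = α ^ ((1:ℝ)/3) := ⟨_, rfl⟩
  have hA : 0 < A := hAdef ▸ Real.rpow_pos_of_pos hα _
  have hA3 : A^3 = α := hAdef ▸ cube α hα.le
  rw [← hAdef] at hM hM2 ⊢
  have ha : 0 < 2 * A := by linarith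
  have hM0 : 0 < M := lt_of_lt_of_le ha hM2
  constructor
  · intro d hd
    obtain ⟨hd1, hd2⟩ := hd
    have hd0 : 0 < d := lt_of_lt_of_le ha hd1
    have h9α : (0:ℝ) ≤ 9 * α := by linarith
    rw [Real.sqrt_div h9α, Real.sqrt_div h9α, Real.sqrt_div h9α]
    have key := aux_endpoint (Real.sqrt (9*α)) (t := Real.sqrt (2*A)) (s := Real.sqrt d)
      (r := Real.sqrt M) (Real.sqrt_pos.mpr ha) (Real.sqrt_le_sqrt hd1) (Real.sqrt_le_sqrt hd2)
    rw [Real.sq_sqrt ha.le, Real.sq_sqrt hd0.le, Real.sq_sqrt hM0.le] at key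
    exact key
  · -- part 2
    have hjR : (2:ℝ) ≤ (j:ℝ) := by exact_mod_cast hj
    have hj0 : (0:ℝ) ≤ (j:ℝ) := by linarith
    have hj10 : (0:ℝ) ≤ (j:ℝ) + 1 := by linarith
    obtain ⟨u, hudef⟩ : ∃ u : ℝ, u = (j:ℝ) ^ ((1:ℝ)/3) := ⟨_, rfl⟩
    obtain ⟨v, hvdef⟩ : ∃ v : ℝ, v = ((j:ℝ) + 1) ^ ((1:ℝ)/3) := ⟨_, rfl⟩
    have hu3 : u^3 = (j:ℝ) := hudef ▸ cube _ hj0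
    have hv3 : v^3 = (j:ℝ) + 1 := hvdef ▸ cube _ hj10
    have hu : 0 < u := hudef ▸ Real.rpow_pos_of_pos (by linarith) _
    have hv : 0 < v := hvdef ▸ Real.rpow_pos_of_pos (by linarith) _
    have huv : u ≤ v := by
      rw [hudef, hvdef]
      exact Real.rpow_le_rpow hj0 (by linarith) (by norm_num)
    have hju2 : (j:ℝ) ^ ((2:ℝ)/3) = u^2 := by rw [sq23 _ hj0, ← hudef]
    have hjv2 : ((j:ℝ) + 1) ^ ((2:ℝ)/3) = v^2 := by rw [sq23 _ hj10, ← hvdef]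
    have hMu : M = u^3 + 7*A + 5*A*u^2 := by rw [hM, hu3, hju2]
    rw [hjv2, ← hv3]
    clear hM hM2 hudef hvdef hAdef
    have key1 : 1 ≤ 3*v*(v^2 - u^2) := by
      nlinarith [mul_nonneg (sub_nonneg.mpr huv) (show (0:ℝ) ≤ 2*v^2 + 2*u*v - u^2 by nlinarith)]
    have key2 : 81 * v^2 ≤ 125 * u^2 := by
      by_contra hcon
      push_neg at hcon
      have h6 : (125*u^2)^3 < (81*v^2)^3 :=
        pow_lt_pow_left₀ hcon (by positivity) (by norm_num)
      have h23 : 2 * v^3 ≤ 3 * u^3 := by rw [hu3, hv3]; linarith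
      nlinarith [pow_pos hu 3, pow_pos hv 3, sq_nonneg (u^3), sq_nonneg (v^3),
        mul_le_mul_of_nonneg_left h23 (show (0:ℝ) ≤ 2*v^3 by positivity),
        mul_le_mul_of_nonneg_left h23 (show (0:ℝ) ≤ 3*u^3 by positivity)]
    have hW : 0 ≤ v^2 - u^2 := sub_nonneg.mpr (pow_le_pow_left₀ hu.le huv 2)
    obtain ⟨R, hRdef⟩ : ∃ R : ℝ, R = 5*A*(v^2 - u^2) := ⟨_, rfl⟩
    have hR0 : 0 ≤ R := by rw [hRdef]; positivity
    have hsqrt : Real.sqrt (9 * α / M) ≤ R := by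
      rw [show R = Real.sqrt (R^2) from (Real.sqrt_sq hR0).symm]
      apply Real.sqrt_le_sqrt
      rw [div_le_iff₀ hM0]
      have h9 : 1 ≤ 9*v^2*(v^2-u^2)^2 := by
        nlinarith [key1, mul_nonneg (mul_nonneg (by norm_num : (0:ℝ) ≤ 3) hv.le) hW]
      have h125 : 9 ≤ 125*u^2*(v^2-u^2)^2 := by
        nlinarith [mul_le_mul_of_nonneg_right key2 (sq_nonneg (v^2-u^2))]
      have hR2 : 25*A^2*(v^2-u^2)^2 ≤ R^2 := le_of_eq (by rw [hRdef]; ring)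
      have hM5 : 5*A*u^2 ≤ M := by rw [hMu]; nlinarith [pow_pos hu 3]
      have hprod : (25*A^2*(v^2-u^2)^2) * (5*A*u^2) ≤ R^2 * M :=
        mul_le_mul hR2 hM5 (by positivity) (by nlinarith [sq_nonneg R])
      have hfin : 9 * A^3 ≤ (25*A^2*(v^2-u^2)^2) * (5*A*u^2) := by
        nlinarith [mul_le_mul_of_nonneg_left h125 (show (0:ℝ) ≤ A^3 by positivity)]
      rw [← hA3]; linarith
    have h1 : v^3 = u^3 + 1 := by rw [hu3, hv3]
    rw [hRdef] at hsqrt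
    linarith [hsqrt, hMu, h1]
end
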